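/- Let δ ∈ (0,2) and β > 0, and let L : ℝ → ℝ be a measurable function satisfying |L(θ)| ≤ β·exp(|θ|^{2−δ}) for all θ ∈ ℝ. Then for every σ > 0 the Gaussian smoothed loss L_σ(θ) = E_{ε ~ N(0,σ²)}[L(θ + ε)] is infinitely differentiable (of class C^∞) as a function of θ on ℝ. -/

import Mathlib

open MeasureTheory ProbabilityTheory Real

/-- The Gaussian smoothing `L_σ(θ) = E_{ε ~ N(0,σ²)}[L (θ + ε)]` of a loss `L`. -/
noncomputable def gaussianSmoothing (L : ℝ → ℝ) (σ θ : ℝ) : ℝ :=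
  ∫ ε, L (θ + ε) ∂(gaussianReal 0 ⟨σ ^ 2, sq_nonneg σ⟩)

section Aux

open Complex

/-- The complexified Gaussian-smoothing integral. -/
noncomputable def gaussianSmoothingC (L : ℝ → ℝ) (σ : ℝ) (z : ℂ) : ℂ :=
  ∫ x : ℝ, (L x : ℂ) * Complex.exp (-((x : ℂ) - z) ^ 2 / (2 * (σ : ℂ) ^ 2))



set_option maxHeartbeats 1000000 in
/-- Master pointwise bound for the complexified Gaussian kernel. -/
lemma gsmooth_master_bound
    (δ β : ℝ) (hδ : δ ∈ Set.Ioo (0 : ℝ) 2) (hβ : 0 < β)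
    (L : ℝ → ℝ)
    (hgrowth : ∀ θ : ℝ, |L θ| ≤ β * Real.exp (|θ| ^ (2 - δ)))
    (σ : ℝ) (hσ : 0 < σ) (z₀ : ℂ) :
    ∃ C : ℝ, ∀ z ∈ Metric.ball z₀ 1, ∀ x : ℝ,
      |L x| * ((1 + ‖(x : ℂ) - z‖ / σ ^ 2) *
          Real.exp ((-((x : ℂ) - z) ^ 2 / (2 * (σ : ℂ) ^ 2)).re))
        ≤ C * Real.exp (-(16 * σ ^ 2)⁻¹ * x ^ 2) := by
  obtain ⟨hδ0, hδ2⟩ := hδ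
  have hs : (0:ℝ) < σ ^ 2 := by positivity
  have h32 : (0:ℝ) < 32 * σ ^ 2 := by positivity
  set R : ℝ := (32 * σ ^ 2) ^ (δ⁻¹) with hRdef
  have hRpos : 0 < R := Real.rpow_pos_of_pos h32 _
  have hRinv : R ^ (-δ) = (32 * σ ^ 2)⁻¹ := by
    rw [hRdef, ← Real.rpow_mul h32.le]
    rw [show δ⁻¹ * (-δ) = -1 by field_simp]
    exact Real.rpow_neg_one _
  have key1 : ∀ x : ℝ, |x| ^ (2 - δ) ≤ (32 * σ ^ 2)⁻¹ * x ^ 2 + R ^ (2 - δ) := by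
    intro x
    rcases le_or_gt |x| R with h | h
    · have h1 : |x| ^ (2 - δ) ≤ R ^ (2 - δ) :=
        Real.rpow_le_rpow (abs_nonneg x) h (by linarith)
      have h2 : (0:ℝ) ≤ (32 * σ ^ 2)⁻¹ * x ^ 2 := by positivity
      linarith
    · have hx : 0 < |x| := hRpos.trans h
      have e1 : |x| ^ (2 - δ) = x ^ 2 * |x| ^ (-δ) := by
        rw [show (2 - δ : ℝ) = ((2:ℕ):ℝ) + (-δ) by push_cast; ring,
          Real.rpow_add hx, Real.rpow_natCast, _root_.sq_abs]
      have e2 : |x| ^ (-δ) ≤ R ^ (-δ) := by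
        rw [Real.rpow_neg (abs_nonneg x), Real.rpow_neg hRpos.le]
        have := Real.rpow_le_rpow hRpos.le h.le hδ0.le
        have hpos := Real.rpow_pos_of_pos hRpos δ
        exact inv_anti₀ hpos this
      have h2 : (0:ℝ) ≤ R ^ (2 - δ) := (Real.rpow_pos_of_pos hRpos _).le
      calc |x| ^ (2 - δ) = x ^ 2 * |x| ^ (-δ) := e1
        _ ≤ x ^ 2 * R ^ (-δ) := by
            exact mul_le_mul_of_nonneg_left e2 (sq_nonneg x)
        _ = (32 * σ ^ 2)⁻¹ * x ^ 2 := by rw [hRinv]; ring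
        _ ≤ (32 * σ ^ 2)⁻¹ * x ^ 2 + R ^ (2 - δ) := le_add_of_nonneg_right h2
  have key2 : ∀ x : ℝ, |x| ≤ (32 * σ ^ 2)⁻¹ * x ^ 2 + 8 * σ ^ 2 := by
    intro x
    have h1 : 0 ≤ x ^ 2 + 256 * σ ^ 4 - 32 * σ ^ 2 * |x| := by
      nlinarith [sq_nonneg (|x| - 16 * σ ^ 2), _root_.sq_abs x]
    have h2 := mul_nonneg (inv_nonneg.mpr h32.le) h1
    have heq : (32 * σ ^ 2)⁻¹ * (x ^ 2 + 256 * σ ^ 4 - 32 * σ ^ 2 * |x|)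
        = (32 * σ ^ 2)⁻¹ * x ^ 2 + 8 * σ ^ 2 - |x| := by
      field_simp
      ring
    rw [heq] at h2
    linarith
  set M : ℝ := ‖z₀‖ + 1 with hM
  have hM0 : (0:ℝ) ≤ M := by positivity
  set C₁ : ℝ := 1 + (M + 1) / σ ^ 2 with hC₁
  set K : ℝ := R ^ (2 - δ) + 8 * σ ^ 2
      + ((|z₀.im| + 1) ^ 2 + z₀.re ^ 2 / 2 + 1) / (2 * σ ^ 2) with hK
  refine ⟨β * C₁ * Real.exp K, fun z hz x => ?_⟩
  have hz1 : ‖z - z₀‖ < 1 := by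
    simpa [Metric.mem_ball, dist_eq_norm] using hz
  have him : |z.im| ≤ |z₀.im| + 1 := by
    have h1 : |z.im - z₀.im| ≤ ‖z - z₀‖ := by
      simpa using Complex.abs_im_le_norm (z - z₀)
    have := abs_sub_abs_le_abs_sub z.im z₀.im
    linarith
  have hre : |z.re - z₀.re| ≤ 1 := by
    have h1 : |z.re - z₀.re| ≤ ‖z - z₀‖ := by
      simpa using Complex.abs_re_le_norm (z - z₀)
    linarith
  have hnorm : ‖(x : ℂ) - z‖ ≤ |x| + M := by
    have h1 : ‖(x:ℂ) - z‖ ≤ ‖(x:ℂ)‖ + ‖z‖ := norm_sub_le _ _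
    have h2 : ‖(x:ℂ)‖ = |x| := by simp
    have h3 : ‖z‖ ≤ ‖z₀‖ + 1 := by
      have h4 : ‖z‖ ≤ ‖z₀‖ + ‖z - z₀‖ := by
        calc ‖z‖ = ‖z₀ + (z - z₀)‖ := by ring_nf
          _ ≤ ‖z₀‖ + ‖z - z₀‖ := norm_add_le _ _
      linarith
    rw [hM]; rw [h2] at h1; linarith
  have hre_calc : (-((x:ℂ) - z) ^ 2 / (2 * (σ:ℂ) ^ 2)).re
      = (z.im ^ 2 - (x - z.re) ^ 2) / (2 * σ ^ 2) := by
    have h2 : (2 * (σ:ℂ) ^ 2) = ((2 * σ ^ 2 : ℝ) : ℂ) := by push_cast; ring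
    rw [h2, Complex.div_ofReal_re]
    congr 1
    simp only [pow_two, Complex.neg_re, Complex.mul_re, Complex.sub_re, Complex.sub_im,
      Complex.ofReal_re, Complex.ofReal_im]
    ring
  -- bound the prefactor
  have hpre : 1 + ‖(x : ℂ) - z‖ / σ ^ 2 ≤ C₁ * Real.exp |x| := by
    have h1 : 1 + ‖(x : ℂ) - z‖ / σ ^ 2 ≤ 1 + (|x| + M) / σ ^ 2 := by
      gcongr
    have h2 : 1 + (|x| + M) / σ ^ 2 ≤ C₁ * Real.exp |x| := by
      have hexp := Real.add_one_le_exp |x|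
      have expand : C₁ * Real.exp |x| - (1 + (|x| + M) / σ ^ 2)
          = ((σ ^ 2 + M + 1) * Real.exp |x| - (σ ^ 2 + |x| + M)) / σ ^ 2 := by
        rw [hC₁]; field_simp; ring
      have hnum : 0 ≤ (σ ^ 2 + M + 1) * Real.exp |x| - (σ ^ 2 + |x| + M) := by
        nlinarith [abs_nonneg x, hs, hM0, Real.exp_pos |x|]
      have : 0 ≤ C₁ * Real.exp |x| - (1 + (|x| + M) / σ ^ 2) := by
        rw [expand]; positivity
      linarith
    linarith
  -- exponent bound
  have hexpo : |x| ^ (2 - δ) + |x| + (z.im ^ 2 - (x - z.re) ^ 2) / (2 * σ ^ 2)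
      ≤ -(16 * σ ^ 2)⁻¹ * x ^ 2 + K := by
    have h4 : x ^ 2 / 4 - z₀.re ^ 2 / 2 - 1 ≤ (x - z.re) ^ 2 := by
      have h := abs_le.mp hre
      nlinarith [sq_nonneg ((x - z₀.re) - 2 * (z.re - z₀.re)), sq_nonneg (x - 2 * z₀.re)]
    have h5 : z.im ^ 2 ≤ (|z₀.im| + 1) ^ 2 := by
      nlinarith [abs_nonneg z.im, abs_nonneg z₀.im, _root_.sq_abs z.im]
    have h6 : (z.im ^ 2 - (x - z.re) ^ 2) / (2 * σ ^ 2)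
        ≤ ((|z₀.im| + 1) ^ 2 - (x ^ 2 / 4 - z₀.re ^ 2 / 2 - 1)) / (2 * σ ^ 2) := by
      have hc : (0:ℝ) < 2 * σ ^ 2 := by positivity
      rw [div_le_div_iff_of_pos_right hc]
      linarith
    have heq2 : ((|z₀.im| + 1) ^ 2 - (x ^ 2 / 4 - z₀.re ^ 2 / 2 - 1)) / (2 * σ ^ 2)
        = ((|z₀.im| + 1) ^ 2 + z₀.re ^ 2 / 2 + 1) / (2 * σ ^ 2) - x ^ 2 / (8 * σ ^ 2) := by
      field_simp; ring
    have heq3 : (32 * σ ^ 2)⁻¹ * x ^ 2 + (32 * σ ^ 2)⁻¹ * x ^ 2 - x ^ 2 / (8 * σ ^ 2)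
        = -(16 * σ ^ 2)⁻¹ * x ^ 2 := by
      field_simp; ring
    have k1 := key1 x
    have k2 := key2 x
    rw [heq2] at h6
    rw [hK]
    linarith
  have step1 : |L x| * ((1 + ‖(x : ℂ) - z‖ / σ ^ 2) *
          Real.exp ((-((x : ℂ) - z) ^ 2 / (2 * (σ : ℂ) ^ 2)).re))
      ≤ (β * Real.exp (|x| ^ (2 - δ))) * ((C₁ * Real.exp |x|) *
          Real.exp ((z.im ^ 2 - (x - z.re) ^ 2) / (2 * σ ^ 2))) := by
    rw [hre_calc]
    have hLb := hgrowth x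
    have e0 : (0:ℝ) ≤ Real.exp ((z.im ^ 2 - (x - z.re) ^ 2) / (2 * σ ^ 2)) :=
      (Real.exp_pos _).le
    have p0 : (0:ℝ) ≤ 1 + ‖(x : ℂ) - z‖ / σ ^ 2 := by positivity
    exact mul_le_mul hLb (mul_le_mul_of_nonneg_right hpre e0)
      (mul_nonneg p0 e0) (by positivity)
  have step2 : (β * Real.exp (|x| ^ (2 - δ))) * ((C₁ * Real.exp |x|) *
          Real.exp ((z.im ^ 2 - (x - z.re) ^ 2) / (2 * σ ^ 2)))
      = (β * C₁) * Real.exp (|x| ^ (2 - δ) + |x|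
          + (z.im ^ 2 - (x - z.re) ^ 2) / (2 * σ ^ 2)) := by
    rw [Real.exp_add, Real.exp_add]
    ring
  have step3 : (β * C₁) * Real.exp (|x| ^ (2 - δ) + |x|
          + (z.im ^ 2 - (x - z.re) ^ 2) / (2 * σ ^ 2))
      ≤ (β * C₁) * Real.exp (-(16 * σ ^ 2)⁻¹ * x ^ 2 + K) := by
    have h := Real.exp_le_exp.mpr hexpo
    have hβC : (0:ℝ) ≤ β * C₁ := by positivity
    exact mul_le_mul_of_nonneg_left h hβC
  have step4 : (β * C₁) * Real.exp (-(16 * σ ^ 2)⁻¹ * x ^ 2 + K)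
      = β * C₁ * Real.exp K * Real.exp (-(16 * σ ^ 2)⁻¹ * x ^ 2) := by
    rw [Real.exp_add]
    ring
  linarith

lemma gsmoothC_differentiable
    (δ β : ℝ) (hδ : δ ∈ Set.Ioo (0 : ℝ) 2) (hβ : 0 < β)
    (L : ℝ → ℝ) (hL : Measurable L)
    (hgrowth : ∀ θ : ℝ, |L θ| ≤ β * Real.exp (|θ| ^ (2 - δ)))
    (σ : ℝ) (hσ : 0 < σ) :
    Differentiable ℂ (gaussianSmoothingC L σ) := by
  intro z₀
  obtain ⟨C, hC⟩ := gsmooth_master_bound δ β hδ hβ L hgrowth σ hσ z₀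
  have hc : (0:ℝ) < (16 * σ ^ 2)⁻¹ := by positivity
  set F : ℂ → ℝ → ℂ := fun z x =>
    (L x : ℂ) * Complex.exp (-((x : ℂ) - z) ^ 2 / (2 * (σ : ℂ) ^ 2)) with hF
  set F' : ℂ → ℝ → ℂ := fun z x =>
    (L x : ℂ) * (Complex.exp (-((x : ℂ) - z) ^ 2 / (2 * (σ : ℂ) ^ 2)) *
      (((x : ℂ) - z) / (σ : ℂ) ^ 2)) with hF'
  have hmeasF : ∀ z : ℂ, AEStronglyMeasurable (F z) volume := by
    intro z
    apply Measurable.aestronglyMeasurable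
    apply (Complex.measurable_ofReal.comp hL).mul
    fun_prop
  have hmeasF' : AEStronglyMeasurable (F' z₀) volume := by
    apply Measurable.aestronglyMeasurable
    apply (Complex.measurable_ofReal.comp hL).mul
    fun_prop
  have hnormF : ∀ z ∈ Metric.ball z₀ 1, ∀ x : ℝ,
      ‖F z x‖ ≤ C * Real.exp (-(16 * σ ^ 2)⁻¹ * x ^ 2) := by
    intro z hz x
    refine le_trans ?_ (hC z hz x)
    rw [hF]
    simp only [norm_mul, Complex.norm_real, Real.norm_eq_abs]
    rw [Complex.norm_exp]
    have h1 : (0:ℝ) ≤ Real.exp ((-((x : ℂ) - z) ^ 2 / (2 * (σ : ℂ) ^ 2)).re) :=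
      (Real.exp_pos _).le
    have h2 : (1:ℝ) ≤ 1 + ‖(x : ℂ) - z‖ / σ ^ 2 := by
      have : (0:ℝ) ≤ ‖(x : ℂ) - z‖ / σ ^ 2 := by positivity
      linarith
    have h4 := mul_le_mul_of_nonneg_right h2 h1
    rw [one_mul] at h4
    exact mul_le_mul_of_nonneg_left h4 (abs_nonneg (L x))
  have hnormF' : ∀ z ∈ Metric.ball z₀ 1, ∀ x : ℝ,
      ‖F' z x‖ ≤ C * Real.exp (-(16 * σ ^ 2)⁻¹ * x ^ 2) := by
    intro z hz x
    refine le_trans ?_ (hC z hz x)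
    rw [hF']
    simp only [norm_mul, Complex.norm_real, Real.norm_eq_abs, norm_div]
    rw [Complex.norm_exp]
    have h3 : ‖((σ : ℂ)) ^ 2‖ = σ ^ 2 := by
      rw [norm_pow]
      simp [abs_of_pos hσ]
    rw [norm_pow] at h3 ⊢
    rw [h3]
    have h1 : (0:ℝ) ≤ Real.exp ((-((x : ℂ) - z) ^ 2 / (2 * (σ : ℂ) ^ 2)).re) :=
      (Real.exp_pos _).le
    have h2 : ‖(x : ℂ) - z‖ / σ ^ 2 ≤ 1 + ‖(x : ℂ) - z‖ / σ ^ 2 := by linarith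
    have h4 := mul_le_mul_of_nonneg_right h2 h1
    linarith [mul_le_mul_of_nonneg_left h4 (abs_nonneg (L x))]
  have hbound_int : Integrable (fun x : ℝ => C * Real.exp (-(16 * σ ^ 2)⁻¹ * x ^ 2)) :=
    (integrable_exp_neg_mul_sq hc).const_mul C
  have hdiff : ∀ x : ℝ, ∀ z ∈ Metric.ball z₀ 1, HasDerivAt (fun z => F z x) (F' z x) z := by
    intro x z _
    have h1 : HasDerivAt (fun z : ℂ => (x : ℂ) - z) (-1) z := by
      simpa using (hasDerivAt_id z).const_sub (x : ℂ)
    have h2 := h1.pow 2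
    have h3 := (h2.neg).div_const (2 * (σ : ℂ) ^ 2)
    have h4 := h3.cexp
    have hσC : ((σ : ℂ)) ^ 2 ≠ 0 := by
      simpa using pow_ne_zero 2 (Complex.ofReal_ne_zero.mpr hσ.ne')
    have h5 : HasDerivAt (fun z : ℂ => Complex.exp (-((x : ℂ) - z) ^ 2 / (2 * (σ : ℂ) ^ 2)))
        (Complex.exp (-((x : ℂ) - z) ^ 2 / (2 * (σ : ℂ) ^ 2)) * (((x : ℂ) - z) / (σ : ℂ) ^ 2)) z := by
      refine h4.congr_deriv ?_
      simp only [Pi.pow_apply, Pi.neg_apply]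
      field_simp
      ring
    simpa [hF, hF'] using h5.const_mul (L x : ℂ)
  have hF_int : Integrable (F z₀) := by
    apply Integrable.mono' hbound_int (hmeasF z₀)
    exact Filter.Eventually.of_forall fun x => hnormF z₀ (Metric.mem_ball_self one_pos) x
  obtain ⟨_, hder⟩ := hasDerivAt_integral_of_dominated_loc_of_deriv_le (Metric.ball_mem_nhds z₀ one_pos)
    (Filter.Eventually.of_forall hmeasF) hF_int hmeasF'
    (Filter.Eventually.of_forall fun x z hz => hnormF' z hz x) hbound_int
    (Filter.Eventually.of_forall fun x z hz => hdiff x z hz)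
  exact hder.differentiableAt

lemma gsmooth_eq_re (L : ℝ → ℝ) (σ : ℝ) (hσ : 0 < σ) (θ : ℝ) :
    gaussianSmoothing L σ θ
      = (Real.sqrt (2 * Real.pi * σ ^ 2))⁻¹ * (gaussianSmoothingC L σ (θ : ℂ)).re := by
  have hv : (⟨σ ^ 2, sq_nonneg σ⟩ : NNReal) ≠ 0 := by
    intro h
    have h2 : ((⟨σ ^ 2, sq_nonneg σ⟩ : NNReal) : ℝ) = σ ^ 2 := rfl
    rw [h] at h2
    exact (pow_ne_zero 2 hσ.ne') h2.symm
  rw [gaussianSmoothing, gaussianReal_of_var_ne_zero _ hv]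
  rw [show gaussianPDF 0 (⟨σ ^ 2, sq_nonneg σ⟩ : NNReal)
      = fun ε => ((Real.toNNReal (gaussianPDFReal 0 (⟨σ ^ 2, sq_nonneg σ⟩ : NNReal) ε) : NNReal) : ENNReal)
    from rfl]
  rw [integral_withDensity_eq_integral_smul
    ((measurable_gaussianPDFReal 0 (⟨σ ^ 2, sq_nonneg σ⟩ : NNReal)).real_toNNReal) (fun ε => L (θ + ε))]
  have hpdf : ∀ ε : ℝ, (Real.toNNReal (gaussianPDFReal 0 (⟨σ ^ 2, sq_nonneg σ⟩ : NNReal) ε) : NNReal)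
      • L (θ + ε) = (Real.sqrt (2 * Real.pi * σ ^ 2))⁻¹
        * (Real.exp (-(ε) ^ 2 / (2 * σ ^ 2)) * L (θ + ε)) := by
    intro ε
    rw [NNReal.smul_def, smul_eq_mul,
      Real.coe_toNNReal _ (gaussianPDFReal_nonneg 0 (⟨σ ^ 2, sq_nonneg σ⟩ : NNReal) ε)]
    unfold gaussianPDFReal
    show (√(2 * π * σ ^ 2))⁻¹ * Real.exp (-(ε - 0) ^ 2 / (2 * σ ^ 2)) * L (θ + ε) = _
    push_cast
    rw [sub_zero]
    ring
  simp_rw [hpdf]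
  rw [integral_const_mul]
  congr 1
  have htrans := integral_add_left_eq_self (μ := volume)
    (fun x : ℝ => Real.exp (-(x - θ) ^ 2 / (2 * σ ^ 2)) * L x) θ
  simp only [add_sub_cancel_left] at htrans
  rw [htrans]
  have hcast : ∀ x : ℝ, (L x : ℂ) * Complex.exp (-((x : ℂ) - (θ:ℂ)) ^ 2 / (2 * (σ : ℂ) ^ 2))
      = ((Real.exp (-(x - θ) ^ 2 / (2 * σ ^ 2)) * L x : ℝ) : ℂ) := by
    intro x
    rw [show (-((x : ℂ) - (θ:ℂ)) ^ 2 / (2 * (σ : ℂ) ^ 2))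
        = ((-(x - θ) ^ 2 / (2 * σ ^ 2) : ℝ) : ℂ) by push_cast; ring]
    rw [← Complex.ofReal_exp]
    push_cast
    ring
  rw [gaussianSmoothingC]
  simp_rw [hcast]
  have hIR : (∫ x : ℝ, ((Real.exp (-(x - θ) ^ 2 / (2 * σ ^ 2)) * L x : ℝ) : ℂ))
      = ((∫ x : ℝ, Real.exp (-(x - θ) ^ 2 / (2 * σ ^ 2)) * L x : ℝ) : ℂ) := integral_ofReal
  rw [hIR, Complex.ofReal_re]

end Aux

/-- If `L : ℝ → ℝ` is measurable and satisfies the growth bound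
`|L θ| ≤ β * exp (|θ| ^ (2 - δ))` for some `β > 0` and `δ ∈ (0, 2)`, then for every `σ > 0`
the Gaussian smoothed loss `θ ↦ L_σ(θ)` is infinitely differentiable (of class `C^∞`). -/
theorem gaussian_smoothing_contDiff
    (δ β : ℝ) (hδ : δ ∈ Set.Ioo (0 : ℝ) 2) (hβ : 0 < β)
    (L : ℝ → ℝ) (hL : Measurable L)
    (hgrowth : ∀ θ : ℝ, |L θ| ≤ β * Real.exp (|θ| ^ (2 - δ)))
    (σ : ℝ) (hσ : 0 < σ) :
    ContDiff ℝ (⊤ : ℕ∞) (fun θ : ℝ => gaussianSmoothing L σ θ) := by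
  have hdiff : Differentiable ℂ (gaussianSmoothingC L σ) :=
    gsmoothC_differentiable δ β hδ hβ L hL hgrowth σ hσ
  have hana : AnalyticOnNhd ℂ (gaussianSmoothingC L σ) Set.univ :=
    fun z _ => hdiff.analyticAt z
  have hcd : ContDiff ℂ ⊤ (gaussianSmoothingC L σ) := hana.contDiff
  have h1 : ContDiff ℝ (⊤ : ℕ∞) (fun θ : ℝ => gaussianSmoothingC L σ (θ : ℂ)) :=
    ((hcd.restrict_scalars ℝ).comp Complex.ofRealCLM.contDiff).of_le le_top
  have h2 : ContDiff ℝ (⊤ : ℕ∞) (fun θ : ℝ => (gaussianSmoothingC L σ (θ : ℂ)).re) :=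
    Complex.reCLM.contDiff.comp h1
  have h3 : ContDiff ℝ (⊤ : ℕ∞) (fun θ : ℝ =>
      (Real.sqrt (2 * Real.pi * σ ^ 2))⁻¹ * (gaussianSmoothingC L σ (θ : ℂ)).re) :=
    contDiff_const.mul h2
  have heq : (fun θ : ℝ => gaussianSmoothing L σ θ) = fun θ : ℝ =>
      (Real.sqrt (2 * Real.pi * σ ^ 2))⁻¹ * (gaussianSmoothingC L σ (θ : ℂ)).re := by
    funext θ
    exact gsmooth_eq_re L σ hσ θ
  rw [heq]
  exact h3
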